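/- For every binary matrix X ∈ {0,1}^{n×m} and every positive integer k, the optimal objective value of MIP(1/k) is at most the optimal objective value of MIP_exact, which in turn is at most the optimal objective value of MIP(1): z_{MIP(1/k)} ≤ ζ_{MIP} ≤ z_{MIP(1)}. -/
import Mathlib


/-- The index set `E = {(i,j) : x_{ij} = 1}` of positive entries of `X`. -/
def Eset (n m : ℕ) (X : Fin n → Fin m → ℕ) : Finset (Fin n × Fin m) :=
  Finset.univ.filter fun p => X p.1 p.2 = 1

/-- The complement of `E`: indices `(i,j)` with `x_{ij} ≠ 1`. -/
def Ecomp (n m : ℕ) (X : Fin n → Fin m → ℕ) : Finset (Fin n × Fin m) :=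
  Finset.univ.filter fun p => X p.1 p.2 ≠ 1

/-- The set `R = {a bᵀ : a ∈ {0,1}^n \ {0}, b ∈ {0,1}^m \ {0}}` of all nonzero
rank-1 binary `n×m` matrices, as a `Finset` (each pair of nonzero binary vectors is
encoded by a pair of nonzero Boolean vectors). -/
def Rset (n m : ℕ) : Finset (Fin n → Fin m → ℕ) :=
  ((Finset.univ : Finset ((Fin n → Bool) × (Fin m → Bool))).filter
      fun p => p.1 ≠ (fun _ => false) ∧ p.2 ≠ (fun _ => false)).image
    fun p => fun i j => (if p.1 i then 1 else 0) * (if p.2 j then 1 else 0)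
/-- Feasibility for the master LP relaxation `MLP_exact`: variables `ξ_{ij} ≥ 0` for
`(i,j) ∈ E`, `π_{ij} ∈ [0,1]` for `(i,j) ∉ E`, `q_Y ∈ [0,1]` for `Y ∈ R`, subject to
`Σ_Y Y_{ij} q_Y + ξ_{ij} ≥ 1` for `(i,j) ∈ E`, `Σ_Y Y_{ij} q_Y ≤ k π_{ij}` for
`(i,j) ∉ E`, and `Σ_Y q_Y ≤ k`. -/
def MLPexactFeasible (n m k : ℕ) (X : Fin n → Fin m → ℕ)
    (ξ π : Fin n → Fin m → ℝ) (q : (Fin n → Fin m → ℕ) → ℝ) : Prop :=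
  (∀ i j, X i j = 1 → 0 ≤ ξ i j) ∧
  (∀ i j, X i j ≠ 1 → π i j ∈ Set.Icc (0 : ℝ) 1) ∧
  (∀ Y ∈ Rset n m, q Y ∈ Set.Icc (0 : ℝ) 1) ∧
  (∀ i j, X i j = 1 → 1 ≤ (∑ Y ∈ Rset n m, (Y i j : ℝ) * q Y) + ξ i j) ∧
  (∀ i j, X i j ≠ 1 → (∑ Y ∈ Rset n m, (Y i j : ℝ) * q Y) ≤ k * π i j) ∧
  (∑ Y ∈ Rset n m, q Y) ≤ k

/-- The objective of `MLP_exact`: `Σ_{(i,j)∈E} ξ_{ij} + Σ_{(i,j)∉E} π_{ij}`. -/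
def MLPexactObj (n m : ℕ) (X : Fin n → Fin m → ℕ) (ξ π : Fin n → Fin m → ℝ) : ℝ :=
  (∑ p ∈ Eset n m X, ξ p.1 p.2) + ∑ p ∈ Ecomp n m X, π p.1 p.2

/-- Feasibility for the master LP `MLP(ρ)`: variables `ξ_{ij} ≥ 0` for `(i,j) ∈ E` and
`q_Y ∈ [0,1]` for `Y ∈ R`, subject to `Σ_Y Y_{ij} q_Y + ξ_{ij} ≥ 1` for `(i,j) ∈ E`
and `Σ_Y q_Y ≤ k`. -/
def MLPrhoFeasible (n m k : ℕ) (X : Fin n → Fin m → ℕ)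
    (ξ : Fin n → Fin m → ℝ) (q : (Fin n → Fin m → ℕ) → ℝ) : Prop :=
  (∀ i j, X i j = 1 → 0 ≤ ξ i j) ∧
  (∀ Y ∈ Rset n m, q Y ∈ Set.Icc (0 : ℝ) 1) ∧
  (∀ i j, X i j = 1 → 1 ≤ (∑ Y ∈ Rset n m, (Y i j : ℝ) * q Y) + ξ i j) ∧
  (∑ Y ∈ Rset n m, q Y) ≤ k

/-- The objective of `MLP(ρ)`:
`Σ_{(i,j)∈E} ξ_{ij} + ρ Σ_{Y∈R} (Σ_{(i,j)∉E} Y_{ij}) q_Y`. -/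
def MLPrhoObj (n m : ℕ) (X : Fin n → Fin m → ℕ) (ρ : ℝ)
    (ξ : Fin n → Fin m → ℝ) (q : (Fin n → Fin m → ℕ) → ℝ) : ℝ :=
  (∑ p ∈ Eset n m X, ξ p.1 p.2) +
    ρ * ∑ Y ∈ Rset n m, (∑ p ∈ Ecomp n m X, (Y p.1 p.2 : ℝ)) * q Y

/-- Feasibility for the master integer program `MIP_exact`: as in `MLP_exact` but with
`π_{ij} ∈ {0,1}` for `(i,j) ∉ E` and `q_Y ∈ {0,1}` for `Y ∈ R`. -/
def MIPexactFeasible (n m k : ℕ) (X : Fin n → Fin m → ℕ)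
    (ξ π : Fin n → Fin m → ℝ) (q : (Fin n → Fin m → ℕ) → ℝ) : Prop :=
  MLPexactFeasible n m k X ξ π q ∧
  (∀ i j, X i j ≠ 1 → (π i j = 0 ∨ π i j = 1)) ∧
  (∀ Y ∈ Rset n m, q Y = 0 ∨ q Y = 1)

/-- Feasibility for the integer program `MIP(ρ)`: as in `MLP(ρ)` but with
`q_Y ∈ {0,1}` for `Y ∈ R`. -/
def MIPrhoFeasible (n m k : ℕ) (X : Fin n → Fin m → ℕ)
    (ξ : Fin n → Fin m → ℝ) (q : (Fin n → Fin m → ℕ) → ℝ) : Prop :=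
  MLPrhoFeasible n m k X ξ q ∧ (∀ Y ∈ Rset n m, q Y = 0 ∨ q Y = 1)


lemma Rset_le_one {n m : ℕ} {Y : Fin n → Fin m → ℕ} (hY : Y ∈ Rset n m)
    (i : Fin n) (j : Fin m) : Y i j ≤ 1 := by
  simp only [Rset, Finset.mem_image, Finset.mem_filter] at hY
  obtain ⟨p, -, rfl⟩ := hY
  dsimp only
  split_ifs <;> simp

lemma swap_sum {n m : ℕ} (S : Finset (Fin n × Fin m)) (q : (Fin n → Fin m → ℕ) → ℝ) :
    ∑ Y ∈ Rset n m, (∑ p ∈ S, (Y p.1 p.2 : ℝ)) * q Y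
      = ∑ p ∈ S, ∑ Y ∈ Rset n m, (Y p.1 p.2 : ℝ) * q Y := by
  rw [Finset.sum_comm]
  exact Finset.sum_congr rfl fun Y _ => Finset.sum_mul ..

/-- For every binary matrix `X ∈ {0,1}^{n×m}` and every positive integer
`k`: `z_{MIP(1/k)} ≤ ζ_{MIP} ≤ z_{MIP(1)}`, i.e. the optimal value of `MIP(1/k)` is at
most that of `MIP_exact`, which in turn is at most that of `MIP(1)`. -/
theorem stmt_11 (n m k : ℕ) (hk : 0 < k) (X : Fin n → Fin m → ℕ)
    (hX : ∀ i j, X i j = 0 ∨ X i j = 1) :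
    sInf {v : ℝ | ∃ (ξ : Fin n → Fin m → ℝ) (q : (Fin n → Fin m → ℕ) → ℝ),
        MIPrhoFeasible n m k X ξ q ∧ v = MLPrhoObj n m X (1 / k) ξ q} ≤
      sInf {v : ℝ | ∃ (ξ π : Fin n → Fin m → ℝ) (q : (Fin n → Fin m → ℕ) → ℝ),
        MIPexactFeasible n m k X ξ π q ∧ v = MLPexactObj n m X ξ π} ∧
    sInf {v : ℝ | ∃ (ξ π : Fin n → Fin m → ℝ) (q : (Fin n → Fin m → ℕ) → ℝ),
        MIPexactFeasible n m k X ξ π q ∧ v = MLPexactObj n m X ξ π} ≤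
      sInf {v : ℝ | ∃ (ξ : Fin n → Fin m → ℝ) (q : (Fin n → Fin m → ℕ) → ℝ),
        MIPrhoFeasible n m k X ξ q ∧ v = MLPrhoObj n m X 1 ξ q} := by
  set Sexact : Set ℝ := {v : ℝ | ∃ (ξ π : Fin n → Fin m → ℝ) (q : (Fin n → Fin m → ℕ) → ℝ),
        MIPexactFeasible n m k X ξ π q ∧ v = MLPexactObj n m X ξ π} with hSexact
  have hk' : (0 : ℝ) < k := by exact_mod_cast hk
  -- trivial feasible points
  have hne_rho : ∀ ρ : ℝ, (MLPrhoObj n m X ρ (fun _ _ => 1) 0) ∈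
      {v : ℝ | ∃ (ξ : Fin n → Fin m → ℝ) (q : (Fin n → Fin m → ℕ) → ℝ),
        MIPrhoFeasible n m k X ξ q ∧ v = MLPrhoObj n m X ρ ξ q} := by
    intro ρ
    refine ⟨fun _ _ => 1, 0, ⟨⟨fun _ _ _ => zero_le_one, fun Y _ => by simp, ?_, by
      simp [hk.le]⟩, fun Y _ => Or.inl rfl⟩, rfl⟩
    intro i j _
    simp
  have hne_exact : (MLPexactObj n m X (fun _ _ => 1) 0) ∈ Sexact := by
    refine ⟨fun _ _ => 1, 0, 0, ⟨⟨fun _ _ _ => zero_le_one, fun _ _ _ => by simp,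
      fun Y _ => by simp, ?_, fun i j _ => by simp, by simp [hk.le]⟩,
      fun _ _ _ => Or.inl rfl, fun Y _ => Or.inl rfl⟩, rfl⟩
    intro i j _
    simp
  -- lower bounds
  have hbdd_rho : ∀ ρ : ℝ, 0 ≤ ρ → (0 : ℝ) ∈ lowerBounds
      {v : ℝ | ∃ (ξ : Fin n → Fin m → ℝ) (q : (Fin n → Fin m → ℕ) → ℝ),
        MIPrhoFeasible n m k X ξ q ∧ v = MLPrhoObj n m X ρ ξ q} := by
    rintro ρ hρ v ⟨ξ, q, ⟨⟨hξ, hq, -, -⟩, -⟩, rfl⟩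
    have h1 : 0 ≤ ∑ p ∈ Eset n m X, ξ p.1 p.2 := by
      refine Finset.sum_nonneg fun p hp => ?_
      exact hξ p.1 p.2 (by simpa [Eset] using hp)
    have h2 : 0 ≤ ∑ Y ∈ Rset n m, (∑ p ∈ Ecomp n m X, (Y p.1 p.2 : ℝ)) * q Y := by
      refine Finset.sum_nonneg fun Y hY => mul_nonneg ?_ (hq Y hY).1
      positivity
    have := mul_nonneg hρ h2
    unfold MLPrhoObj; linarith
  have hbdd_exact : (0 : ℝ) ∈ lowerBounds Sexact := by
    rintro v ⟨ξ, π, q, ⟨⟨hξ, hπ, -, -, -, -⟩, -, -⟩, rfl⟩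
    have h1 : 0 ≤ ∑ p ∈ Eset n m X, ξ p.1 p.2 := by
      refine Finset.sum_nonneg fun p hp => hξ p.1 p.2 (by simpa [Eset] using hp)
    have h2 : 0 ≤ ∑ p ∈ Ecomp n m X, π p.1 p.2 := by
      refine Finset.sum_nonneg fun p hp => (hπ p.1 p.2 (by simpa [Ecomp] using hp)).1
    unfold MLPexactObj; linarith
  constructor
  · -- z_{MIP(1/k)} ≤ ζ_MIP
    refine le_csInf ⟨_, hne_exact⟩ ?_
    rintro v ⟨ξ, π, q, ⟨⟨hξ, hπ, hq, hcov, hpen, hcard⟩, -, hqbin⟩, rfl⟩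
    refine le_trans (csInf_le ⟨0, hbdd_rho (1/k) (by positivity)⟩
      ⟨ξ, q, ⟨⟨hξ, hq, hcov, hcard⟩, hqbin⟩, rfl⟩) ?_
    unfold MLPrhoObj MLPexactObj
    have key : ∑ Y ∈ Rset n m, (∑ p ∈ Ecomp n m X, (Y p.1 p.2 : ℝ)) * q Y
        ≤ k * ∑ p ∈ Ecomp n m X, π p.1 p.2 := by
      rw [swap_sum, Finset.mul_sum]
      exact Finset.sum_le_sum fun p hp => hpen p.1 p.2 (by simpa [Ecomp] using hp)
    have : (1/(k:ℝ)) * ∑ Y ∈ Rset n m, (∑ p ∈ Ecomp n m X, (Y p.1 p.2 : ℝ)) * q Y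
        ≤ ∑ p ∈ Ecomp n m X, π p.1 p.2 := by
      rw [div_mul_eq_mul_div, one_mul, div_le_iff₀ hk', mul_comm]
      exact key
    linarith
  · -- ζ_MIP ≤ z_{MIP(1)}
    refine le_csInf ⟨_, hne_rho 1⟩ ?_
    rintro v ⟨ξ, q, ⟨⟨hξ, hq, hcov, hcard⟩, hqbin⟩, rfl⟩
    set π : Fin n → Fin m → ℝ := fun i j =>
      if (∑ Y ∈ Rset n m, (Y i j : ℝ) * q Y) = 0 then 0 else 1 with hπdef
    have hsum_nonneg : ∀ i j, (0:ℝ) ≤ ∑ Y ∈ Rset n m, (Y i j : ℝ) * q Y := by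
      intro i j
      exact Finset.sum_nonneg fun Y hY => mul_nonneg (by positivity) (hq Y hY).1
    have hterm : ∀ i j, ∀ Y ∈ Rset n m, (Y i j : ℝ) * q Y ≤ q Y := by
      intro i j Y hY
      have h1 : (Y i j : ℝ) ≤ 1 := by exact_mod_cast Rset_le_one hY i j
      calc (Y i j : ℝ) * q Y ≤ 1 * q Y :=
            mul_le_mul_of_nonneg_right h1 (hq Y hY).1
        _ = q Y := one_mul _
    have hsum_le_k : ∀ i j, (∑ Y ∈ Rset n m, (Y i j : ℝ) * q Y) ≤ k := by
      intro i j
      calc (∑ Y ∈ Rset n m, (Y i j : ℝ) * q Y) ≤ ∑ Y ∈ Rset n m, q Y :=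
            Finset.sum_le_sum (hterm i j)
        _ ≤ k := hcard
    have hπmem : ∀ i j, X i j ≠ 1 → π i j ∈ Set.Icc (0:ℝ) 1 := by
      intro i j _
      by_cases h : (∑ Y ∈ Rset n m, (Y i j : ℝ) * q Y) = 0 <;>
        simp [hπdef, h]
    have hpen : ∀ i j, X i j ≠ 1 →
        (∑ Y ∈ Rset n m, (Y i j : ℝ) * q Y) ≤ k * π i j := by
      intro i j _
      by_cases h : (∑ Y ∈ Rset n m, (Y i j : ℝ) * q Y) = 0
      · simp [hπdef, h]
      · simp only [hπdef, h, if_false, mul_one]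
        exact hsum_le_k i j
    have hπbin : ∀ i j, X i j ≠ 1 → π i j = 0 ∨ π i j = 1 := by
      intro i j _
      by_cases h : (∑ Y ∈ Rset n m, (Y i j : ℝ) * q Y) = 0 <;> simp [hπdef, h]
    refine le_trans (csInf_le ⟨0, hbdd_exact⟩ ⟨ξ, π, q,
      ⟨⟨hξ, hπmem, hq, hcov, hpen, hcard⟩, hπbin, hqbin⟩, rfl⟩) ?_
    unfold MLPrhoObj MLPexactObj
    rw [one_mul, swap_sum]
    have hle : ∀ p ∈ Ecomp n m X, π p.1 p.2 ≤ ∑ Y ∈ Rset n m, (Y p.1 p.2 : ℝ) * q Y := by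
      intro p hp
      by_cases h : (∑ Y ∈ Rset n m, (Y p.1 p.2 : ℝ) * q Y) = 0
      · simp [hπdef, h]
      · simp only [hπdef, h, if_false]
        obtain ⟨Y, hY, hYne⟩ :
            ∃ Y ∈ Rset n m, (Y p.1 p.2 : ℝ) * q Y ≠ 0 := by
          by_contra hall
          push_neg at hall
          exact h (Finset.sum_eq_zero hall)
        have hq1 : q Y = 1 := by
          rcases hqbin Y hY with h0 | h1
          · exact absurd (by rw [h0]; ring) hYne
          · exact h1
        have hY1 : 1 ≤ (Y p.1 p.2 : ℝ) := by
          have : Y p.1 p.2 ≠ 0 := by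
            intro h0
            exact hYne (by rw [h0]; simp)
          exact_mod_cast Nat.one_le_iff_ne_zero.2 this
        have h1le : (1:ℝ) ≤ (Y p.1 p.2 : ℝ) * q Y := by rw [hq1, mul_one]; exact hY1
        calc (1:ℝ) ≤ (Y p.1 p.2 : ℝ) * q Y := h1le
          _ ≤ ∑ Z ∈ Rset n m, (Z p.1 p.2 : ℝ) * q Z :=
              Finset.single_le_sum (f := fun Z => (Z p.1 p.2 : ℝ) * q Z)
                (fun Z hZ => mul_nonneg (by positivity) (hq Z hZ).1) hY
    have := Finset.sum_le_sum hle
    linarith
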